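/- Cut reduction on unification nets is strongly normalizing: each cut reduction strictly decreases the size of the underlying cut sequent, hence every sequence of cut reductions from a unification net terminates, and the length of any reduction sequence is bounded by the size of the cut sequent. -/

import Mathlib

set_option autoImplicit false

namespace UNets

/-! ### First-order terms -/

/-- First-order terms over function symbols coded by naturals
(constants are nullary function symbols); variables are coded by naturals. -/
inductive Term : Type where
  | var : ℕ → Term
  | app : ℕ → List Term → Term

mutual
/-- Simultaneous substitution on terms. -/
def Term.subst (σ : ℕ → Term) : Term → Term
  | .var x => σ x
  | .app f ts => .app f (Term.substList σ ts)

def Term.substList (σ : ℕ → Term) : List Term → List Term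
  | [] => []
  | t :: ts => Term.subst σ t :: Term.substList σ ts
end

mutual
/-- Does the variable `x` occur in the term? -/
def Term.occurs (x : ℕ) : Term → Bool
  | .var y => x == y
  | .app _ ts => Term.occursList x ts

def Term.occursList (x : ℕ) : List Term → Bool
  | [] => false
  | t :: ts => Term.occurs x t || Term.occursList x ts
end

mutual
/-- The list of variables occurring in a term. -/
def Term.varList : Term → List ℕ
  | .var x => [x]
  | .app _ ts => Term.varListL ts

def Term.varListL : List Term → List ℕ
  | [] => []
  | t :: ts => Term.varList t ++ Term.varListL ts
end

mutual
/-- Does the function symbol `f` occur in the term? -/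
def Term.hasFun (f : ℕ) : Term → Bool
  | .var _ => false
  | .app g ts => (f == g) || Term.hasFunL f ts

def Term.hasFunL (f : ℕ) : List Term → Bool
  | [] => false
  | t :: ts => Term.hasFun f t || Term.hasFunL f ts
end

mutual
/-- Number of occurrences of the function symbol `f` in a term. -/
def Term.countFun (f : ℕ) : Term → ℕ
  | .var _ => 0
  | .app g ts => (if f = g then 1 else 0) + Term.countFunL f ts

def Term.countFunL (f : ℕ) : List Term → ℕ
  | [] => 0
  | t :: ts => Term.countFun f t + Term.countFunL f ts
end

/-- The substitution replacing the single variable `x` by the term `t`. -/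
def varSubst (x : ℕ) (t : Term) : ℕ → Term := fun y => if y = x then t else .var y

/-- Arity-preserving duality on predicate symbols (coded by naturals):
`dualP (dualP p) = p` and `dualP p ≠ p`. -/
def dualP (p : ℕ) : ℕ := if p % 2 = 0 then p + 1 else p - 1

end UNets
/-! ### Formulas and sequents of first-order MLL -/

namespace UNets

/-- Formulas of unit-free first-order multiplicative linear logic.
Atoms are `atom p ts` for a predicate symbol `p` and a list of terms `ts`. -/
inductive Formula : Type where
  | atom : ℕ → List Term → Formula
  | tensor : Formula → Formula → Formula
  | parr : Formula → Formula → Formula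
  | fall : ℕ → Formula → Formula
  | fex : ℕ → Formula → Formula

/-- De Morgan negation (duality) of formulas. -/
def Formula.dual : Formula → Formula
  | .atom p ts => .atom (dualP p) ts
  | .tensor A B => .parr A.dual B.dual
  | .parr A B => .tensor A.dual B.dual
  | .fall x A => .fex x A.dual
  | .fex x A => .fall x A.dual

/-- Substitution on formulas (binders shield their variable). -/
def Formula.subst (σ : ℕ → Term) : Formula → Formula
  | .atom p ts => .atom p (Term.substList σ ts)
  | .tensor A B => .tensor (A.subst σ) (B.subst σ)
  | .parr A B => .parr (A.subst σ) (B.subst σ)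
  | .fall x A => .fall x (A.subst fun y => if y = x then .var y else σ y)
  | .fex x A => .fex x (A.subst fun y => if y = x then .var y else σ y)

/-- `A[t/x]`: substitute the term `t` for the variable `x` in `A`. -/
def Formula.subst1 (A : Formula) (x : ℕ) (t : Term) : Formula := A.subst (varSubst x t)

/-- Does `x` occur free in the formula? -/
def Formula.freeIn (x : ℕ) : Formula → Bool
  | .atom _ ts => Term.occursList x ts
  | .tensor A B => Formula.freeIn x A || Formula.freeIn x B
  | .parr A B => Formula.freeIn x A || Formula.freeIn x B
  | .fall y A => (x != y) && Formula.freeIn x A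
  | .fex y A => (x != y) && Formula.freeIn x A

/-- The leaves (atom occurrences) of a formula, in left-to-right order. -/
def Formula.leaves : Formula → List (ℕ × List Term)
  | .atom p ts => [(p, ts)]
  | .tensor A B => A.leaves ++ B.leaves
  | .parr A B => A.leaves ++ B.leaves
  | .fall _ A => A.leaves
  | .fex _ A => A.leaves

/-- All variables bound by a quantifier in the formula. -/
def Formula.boundList : Formula → List ℕ
  | .atom _ _ => []
  | .tensor A B => A.boundList ++ B.boundList
  | .parr A B => A.boundList ++ B.boundList
  | .fall x A => x :: A.boundList
  | .fex x A => x :: A.boundList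

/-- The existential variables (variables bound by `∃`) of the formula. -/
def Formula.exList : Formula → List ℕ
  | .atom _ _ => []
  | .tensor A B => A.exList ++ B.exList
  | .parr A B => A.exList ++ B.exList
  | .fall _ A => A.exList
  | .fex x A => x :: A.exList

/-- The universal variables (variables bound by `∀`) of the formula. -/
def Formula.allList : Formula → List ℕ
  | .atom _ _ => []
  | .tensor A B => A.allList ++ B.allList
  | .parr A B => A.allList ++ B.allList
  | .fall x A => x :: A.allList
  | .fex _ A => A.allList

/-- The free variables of the formula. -/
def Formula.freeList : Formula → List ℕ
  | .atom _ ts => Term.varListL ts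
  | .tensor A B => A.freeList ++ B.freeList
  | .parr A B => A.freeList ++ B.freeList
  | .fall x A => A.freeList.filter (fun y => decide (y ≠ x))
  | .fex x A => A.freeList.filter (fun y => decide (y ≠ x))

/-- The predicate symbols occurring in the formula. -/
def Formula.predSyms : Formula → List ℕ
  | .atom p _ => [p]
  | .tensor A B => A.predSyms ++ B.predSyms
  | .parr A B => A.predSyms ++ B.predSyms
  | .fall _ A => A.predSyms
  | .fex _ A => A.predSyms

/-- Quantifier-free formulas (MLL formulas). -/
def Formula.qfree : Formula → Bool
  | .atom _ _ => true
  | .tensor A B => A.qfree && B.qfree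
  | .parr A B => A.qfree && B.qfree
  | .fall _ _ => false
  | .fex _ _ => false

/-- Size of a formula. -/
def Formula.size : Formula → ℕ
  | .atom _ _ => 1
  | .tensor A B => A.size + B.size + 1
  | .parr A B => A.size + B.size + 1
  | .fall _ A => A.size + 1
  | .fex _ A => A.size + 1

/-- A sequent is a (finite ordered) disjoint union of formulas. -/
abbrev Sequent := List Formula

/-- The leaves of a sequent, in left-to-right order.  A *leaf* of the sequent is
identified with its index in this list. -/
def Sequent.leaves (Γ : Sequent) : List (ℕ × List Term) := (Γ.map Formula.leaves).flatten

def leafCountF (A : Formula) : ℕ := A.leaves.length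
def leafCountS (Γ : Sequent) : ℕ := (Sequent.leaves Γ).length

def Sequent.exList (Γ : Sequent) : List ℕ := (Γ.map Formula.exList).flatten
def Sequent.allList (Γ : Sequent) : List ℕ := (Γ.map Formula.allList).flatten
def Sequent.boundList (Γ : Sequent) : List ℕ := (Γ.map Formula.boundList).flatten

/-- A sequent is clean if all quantified variables are distinct from each other
and from all free variables. -/
def CleanSeq (Γ : Sequent) : Prop :=
  (Sequent.boundList Γ).Nodup ∧
  ∀ x ∈ Sequent.boundList Γ, ∀ A ∈ Γ, Formula.freeIn x A = false

end UNets
/-! ### Linkings, unifiers, mgus, precedences -/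

namespace UNets

/-- A linking: a finite set of (ordered-pair encoded) links between leaf indices. -/
abbrev Linking := Finset (ℕ × ℕ)

/-- Normalize an unordered pair. -/
def mkpair (a b : ℕ) : ℕ × ℕ := if a ≤ b then (a, b) else (b, a)

/-- The leaves `i` and `j` are linked in `θ`. -/
def InLink (θ : Linking) (i j : ℕ) : Prop := (i, j) ∈ θ ∨ (j, i) ∈ θ

/-- `θ` is a linking on `Γ`: a set of disjoint links, between leaves with dual
predicate symbols, whose union contains every leaf of `Γ`. -/
def IsLinking (Γ : Sequent) (θ : Linking) : Prop :=
  (∀ e ∈ θ, e.1 < e.2 ∧ e.2 < leafCountS Γ) ∧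
  (∀ i < leafCountS Γ, ∃! e : ℕ × ℕ, e ∈ θ ∧ (i = e.1 ∨ i = e.2)) ∧
  (∀ e ∈ θ, ∀ a b : ℕ × List Term,
    (Sequent.leaves Γ)[e.1]? = some a → (Sequent.leaves Γ)[e.2]? = some b →
      a.1 = dualP b.1)

/-- `σ` is a unifier for the linking `θ` on `Γ`: an assignment of terms to the
existential variables of `Γ` (all other variables are fixed) which equalizes the
term sequences at the two ends of every link. -/
def Unifies (Γ : Sequent) (θ : Linking) (σ : ℕ → Term) : Prop :=
  (∀ x, x ∉ Sequent.exList Γ → σ x = .var x) ∧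
  (∀ e ∈ θ, ∀ a b : ℕ × List Term,
    (Sequent.leaves Γ)[e.1]? = some a → (Sequent.leaves Γ)[e.2]? = some b →
      a.1 = dualP b.1 ∧ Term.substList σ a.2 = Term.substList σ b.2)

/-- `σ` is a most general unifier (mgu) of `θ` on `Γ`: a unifier from which every
unifier is obtained by a further substitution (of terms for free variables:
the substitution `ρ` fixes all bound variables of `Γ`). -/
def IsMGU (Γ : Sequent) (θ : Linking) (σ : ℕ → Term) : Prop :=
  Unifies Γ θ σ ∧
  ∀ τ, Unifies Γ θ τ →
    ∃ ρ : ℕ → Term, (∀ z ∈ Sequent.boundList Γ, ρ z = Term.var z) ∧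
      ∀ x, τ x = Term.subst ρ (σ x)

/-- The precedence relation `x ≺ y`: the existential variable `x` is assigned,
by every unifier (equivalently by the mgu), a term containing the universal
variable `y`. -/
def Precedes (Γ : Sequent) (θ : Linking) (x y : ℕ) : Prop :=
  x ∈ Sequent.exList Γ ∧ y ∈ Sequent.allList Γ ∧
  ∀ σ, Unifies Γ θ σ → Term.occurs y (σ x) = true

end UNets
/-! ### The graph of a linking, switchings, correctness -/

namespace UNets

/-- A position (vertex) in a sequent forest: a formula index together with a
path into the formula tree (for unary vertices the path step is `false`). -/
abbrev Pos := ℕ × List Bool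

/-- The subformula of a formula at a path. -/
def Formula.sub? : Formula → List Bool → Option Formula
  | A, [] => some A
  | .tensor A B, b :: q => Formula.sub? (if b then B else A) q
  | .parr A B, b :: q => Formula.sub? (if b then B else A) q
  | .fall _ A, false :: q => Formula.sub? A q
  | .fex _ A, false :: q => Formula.sub? A q
  | _, _ => none

/-- The subformula of a sequent at a position (if the position is valid). -/
def Sequent.pos? (Γ : Sequent) (v : Pos) : Option Formula :=
  match Γ[v.1]? with
  | some A => A.sub? v.2
  | none => none

/-- The paths of the leaves of a formula, in left-to-right order. -/
def Formula.leafPaths : Formula → List (List Bool)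
  | .atom _ _ => [[]]
  | .tensor A B => A.leafPaths.map (false :: ·) ++ B.leafPaths.map (true :: ·)
  | .parr A B => A.leafPaths.map (false :: ·) ++ B.leafPaths.map (true :: ·)
  | .fall _ A => A.leafPaths.map (false :: ·)
  | .fex _ A => A.leafPaths.map (false :: ·)

/-- The positions of the leaves of a sequent; leaf number `i` of `Γ` is the
position `(Sequent.leafPos Γ)[i]?`. -/
def Sequent.leafPos (Γ : Sequent) : List Pos :=
  ((Γ.zipIdx.map Prod.swap).map (fun p => p.2.leafPaths.map (fun q => (p.1, q)))).flatten

/-- `a` is a child of `b` in the sequent forest (edge directed from `a` into `b`). -/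
def ChildEdge (a b : Pos) : Prop := a.1 = b.1 ∧ ∃ d, a.2 = b.2 ++ [d]

/-- Undirected edge between the two leaves of a link of `θ`. -/
def LinkEdge (Γ : Sequent) (θ : Linking) (a b : Pos) : Prop :=
  ∃ e ∈ θ, ((Sequent.leafPos Γ)[e.1]? = some a ∧ (Sequent.leafPos Γ)[e.2]? = some b) ∨
           ((Sequent.leafPos Γ)[e.1]? = some b ∧ (Sequent.leafPos Γ)[e.2]? = some a)

/-- A leap: a directed edge from an `∃x` vertex to a `∀y` vertex whenever `x ≺ y`. -/
def Leap (Γ : Sequent) (θ : Linking) (a b : Pos) : Prop :=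
  ∃ x y A B, Sequent.pos? Γ a = some (.fex x A) ∧ Sequent.pos? Γ b = some (.fall y B) ∧
    Precedes Γ θ x y

/-- Switched vertices: `⅋` and `∀` vertices. -/
def Switched (Γ : Sequent) (v : Pos) : Prop :=
  (∃ A B, Sequent.pos? Γ v = some (.parr A B)) ∨ (∃ x A, Sequent.pos? Γ v = some (.fall x A))

/-- The vertex set of the graph of a linking on `Γ`: the valid positions of `Γ`. -/
abbrev VertexSet (Γ : Sequent) := {v : Pos // (Sequent.pos? Γ v).isSome}

/-- The (undirected closure of the) graph of a linking, parametrized by a leap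
relation: forest edges, link edges and leaps. -/
def graphRel (Γ : Sequent) (θ : Linking) (leap : Pos → Pos → Prop) (a b : Pos) : Prop :=
  ChildEdge a b ∨ ChildEdge b a ∨ LinkEdge Γ θ a b ∨ leap a b ∨ leap b a

def graphOf (Γ : Sequent) (θ : Linking) (leap : Pos → Pos → Prop) :
    SimpleGraph (VertexSet Γ) :=
  SimpleGraph.fromRel (fun a b => graphRel Γ θ leap a.val b.val)

/-- The directed edges into a vertex: forest edges from children and leaps. -/
def Incoming (leap : Pos → Pos → Prop) (a b : Pos) : Prop := ChildEdge a b ∨ leap a b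

/-- `sw` is a valid switching: at each switched (`⅋` or `∀`) vertex `b` it selects
(the source `sw b` of) one incoming edge. -/
def ValidSw (Γ : Sequent) (leap : Pos → Pos → Prop) (sw : Pos → Pos) : Prop :=
  ∀ b : Pos, (Sequent.pos? Γ b).isSome → Switched Γ b →
    (Sequent.pos? Γ (sw b)).isSome ∧ Incoming leap (sw b) b

/-- The edges surviving the switching `sw`: all link edges, and directed edges into
unswitched vertices; at a switched vertex only the selected incoming edge survives
(all edges then undirected). -/
def switchRel (Γ : Sequent) (θ : Linking) (leap : Pos → Pos → Prop) (sw : Pos → Pos)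
    (a b : Pos) : Prop :=
  LinkEdge Γ θ a b ∨
  (Incoming leap a b ∧ (Switched Γ b → sw b = a)) ∨
  (Incoming leap b a ∧ (Switched Γ a → sw a = b))

def switchGraph (Γ : Sequent) (θ : Linking) (leap : Pos → Pos → Prop) (sw : Pos → Pos) :
    SimpleGraph (VertexSet Γ) :=
  SimpleGraph.fromRel (fun a b => switchRel Γ θ leap sw a.val b.val)

/-- Every switching of the graph is a tree (acyclic and connected). -/
def AllSwitchingsTrees (Γ : Sequent) (θ : Linking) (leap : Pos → Pos → Prop) : Prop :=
  ∀ sw, ValidSw Γ leap sw → (switchGraph Γ θ leap sw).IsTree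

/-- The graph has a switching cycle: a cycle surviving some switching, i.e. a cycle
with at most one directed edge into any `⅋` or `∀` vertex. -/
def HasSwitchingCycle (Γ : Sequent) (θ : Linking) (leap : Pos → Pos → Prop) : Prop :=
  ∃ sw, ValidSw Γ leap sw ∧ ¬ (switchGraph Γ θ leap sw).IsAcyclic

/-- Correctness: a cut-free unification net on `Γ` is a linking on `Γ` which is
unifiable and all of whose switchings are trees. -/
def IsUNet (Γ : Sequent) (θ : Linking) : Prop :=
  IsLinking Γ θ ∧ (∃ σ, Unifies Γ θ σ) ∧ AllSwitchingsTrees Γ θ (Leap Γ θ)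

/-- A root `⊗` vertex `v` splits if deleting it (together with its incident edges)
disconnects the graph of the linking. -/
def Splits (Γ : Sequent) (θ : Linking) (v : Pos) : Prop :=
  ¬ (((graphOf Γ θ (Leap Γ θ)).induce {u : VertexSet Γ | u.val ≠ v}).Preconnected)

end UNets
/-! ### The cut-free sequent calculus and its translation to linkings -/

namespace UNets

/-- Insert an element at index `n` of a list. -/
def insertAt {α : Type} (n : ℕ) (a : α) (l : List α) : List α := l.take n ++ a :: l.drop n

/-- Descriptors of the unary rules of the calculus (acting at a formula index):
exchange of adjacent formulas, `⅋`, `∃` (with explicit witness), `∀`. -/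
inductive URule : Type where
  | uexch : ℕ → URule
  | uparr : ℕ → URule
  | uex : ℕ → ℕ → Term → URule
  | uall : ℕ → ℕ → URule

/-- The premise (hypothesis) sequent of a unary rule applied at its position of
the conclusion `Γ`, if the rule applies.  The `∀` rule carries its side condition:
the eigenvariable is not free in the context. -/
def prem (r : URule) (Γ : Sequent) : Option Sequent :=
  match r with
  | .uexch i =>
    match Γ[i]?, Γ[i+1]? with
    | some A, some B => some ((Γ.set i B).set (i+1) A)
    | _, _ => none
  | .uparr i =>
    match Γ[i]? with
    | some (.parr A B) => some (insertAt (i+1) B (Γ.set i A))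
    | _ => none
  | .uex i x t =>
    match Γ[i]? with
    | some (.fex y A) => if y = x then some (Γ.set i (A.subst1 x t)) else none
    | _ => none
  | .uall i x =>
    match Γ[i]? with
    | some (.fall y A) =>
      if y = x ∧ ((Γ.zipIdx.map Prod.swap).all fun p => p.1 == i || !(Formula.freeIn x p.2)) = true then
        some (Γ.set i A)
      else none
    | _ => none

/-- Cut-free proofs of first-order MLL, indexed by the concluding sequent:
axiom `⊢ P t₁…tₙ, P̄ t₁…tₙ`; the unary rules; and the `⊗` rule, splitting the
context into the part left of the tensor formula and the part right of it. -/
inductive Proof : Sequent → Type where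
  | ax (p : ℕ) (ts : List Term) : Proof [.atom p ts, .atom (dualP p) ts]
  | unary (r : URule) (Γ Γ' : Sequent) (h : prem r Γ = some Γ') (π : Proof Γ') : Proof Γ
  | tensor (Γ : Sequent) (i : ℕ) (A B : Formula) (h : Γ[i]? = some (.tensor A B))
      (π₁ : Proof (Γ.take i ++ [A])) (π₂ : Proof (B :: Γ.drop (i+1))) : Proof Γ

/-- Tracking leaf indices from the premise of a unary rule to its conclusion
(only the exchange rule permutes leaves). -/
def remap (r : URule) (Γ : Sequent) (k : ℕ) : ℕ :=
  match r with
  | .uexch i =>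
    let n0 := leafCountS (Γ.take i)
    let a := match Γ[i]? with | some A => leafCountF A | none => 0
    let b := match Γ[i+1]? with | some B => leafCountF B | none => 0
    if k < n0 then k
    else if k < n0 + b then k + a
    else if k < n0 + b + a then k - b
    else k
  | _ => k

/-- The translation `⌊Π⌋` of a cut-free proof to a linking on its conclusion,
tracking the two dual predicate-symbol occurrences of each axiom down to the
leaves of the conclusion. -/
def translate : {Γ : Sequent} → Proof Γ → Linking
  | _, .ax _ _ => {(0, 1)}
  | _, .unary r Γ _ _ π =>
      (translate π).image (fun e => mkpair (remap r Γ e.1) (remap r Γ e.2))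
  | _, .tensor Γ i A _ _ π₁ π₂ =>
      translate π₁ ∪
      (translate π₂).image
        (fun e => (e.1 + leafCountS (Γ.take i ++ [A]), e.2 + leafCountS (Γ.take i ++ [A])))

end UNets
/-! ### Rule commutations -/

namespace UNets

/-- The active (introduced) formula index of a unary rule (none for exchange). -/
def URule.actIdx : URule → Option ℕ
  | .uexch _ => none
  | .uparr i => some i
  | .uex i _ _ => some i
  | .uall i _ => some i

/-- Two unary rule descriptors are the same rule instance up to a shift of its
position (same kind, same variable, same witness). -/
def sameKind : URule → URule → Prop
  | .uexch _, .uexch _ => True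
  | .uparr _, .uparr _ => True
  | .uex _ x t, .uex _ x' t' => x = x' ∧ t = t'
  | .uall _ x, .uall _ x' => x = x'
  | _, _ => False

/-- One-step rule commutation at the root of a proof: the last two rules are
independent and are performed in either order (reaching the same premises).
The side conditions of the rules (in particular the `∀` side condition on free
variables, and well-formedness of `∃/∀` reorderings) are enforced by the
well-formedness of both proofs. -/
inductive Step : {Γ : Sequent} → Proof Γ → Proof Γ → Prop where
  | uu {Γ Δ₁ Δ₂ Δ₀ : Sequent} (r s r' s' : URule)
      (h1 : prem r Γ = some Δ₁) (h2 : prem s Δ₁ = some Δ₀)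
      (h3 : prem s' Γ = some Δ₂) (h4 : prem r' Δ₂ = some Δ₀)
      (hr : sameKind r r') (hs : sameKind s s')
      (π : Proof Δ₀) :
      Step (Proof.unary r Γ Δ₁ h1 (Proof.unary s Δ₁ Δ₀ h2 π))
           (Proof.unary s' Γ Δ₂ h3 (Proof.unary r' Δ₂ Δ₀ h4 π))
  | ut_left {Γ Γ₂ Δ₀ : Sequent} (i i₂ : ℕ) (A B : Formula) (r r' : URule)
      (h : Γ[i]? = some (.tensor A B)) (hrp : prem r (Γ.take i ++ [A]) = some Δ₀)
      (h' : prem r' Γ = some Γ₂) (h₂ : Γ₂[i₂]? = some (.tensor A B))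
      (hk : sameKind r r')
      (hL : Γ₂.take i₂ ++ [A] = Δ₀) (hR : B :: Γ₂.drop (i₂+1) = B :: Γ.drop (i+1))
      (π₁ : Proof Δ₀) (π₁' : Proof (Γ₂.take i₂ ++ [A])) (hπ₁ : HEq π₁' π₁)
      (π₂ : Proof (B :: Γ.drop (i+1))) (π₂' : Proof (B :: Γ₂.drop (i₂+1))) (hπ₂ : HEq π₂' π₂) :
      Step (Proof.tensor Γ i A B h (Proof.unary r (Γ.take i ++ [A]) Δ₀ hrp π₁) π₂)
           (Proof.unary r' Γ Γ₂ h' (Proof.tensor Γ₂ i₂ A B h₂ π₁' π₂'))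
  | ut_right {Γ Γ₂ Δ₀ : Sequent} (i i₂ : ℕ) (A B : Formula) (r r' : URule)
      (h : Γ[i]? = some (.tensor A B)) (hrp : prem r (B :: Γ.drop (i+1)) = some Δ₀)
      (h' : prem r' Γ = some Γ₂) (h₂ : Γ₂[i₂]? = some (.tensor A B))
      (hk : sameKind r r')
      (hR : B :: Γ₂.drop (i₂+1) = Δ₀) (hL : Γ₂.take i₂ ++ [A] = Γ.take i ++ [A])
      (π₂ : Proof Δ₀) (π₂' : Proof (B :: Γ₂.drop (i₂+1))) (hπ₂ : HEq π₂' π₂)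
      (π₁ : Proof (Γ.take i ++ [A])) (π₁' : Proof (Γ₂.take i₂ ++ [A])) (hπ₁ : HEq π₁' π₁) :
      Step (Proof.tensor Γ i A B h π₁ (Proof.unary r (B :: Γ.drop (i+1)) Δ₀ hrp π₂))
           (Proof.unary r' Γ Γ₂ h' (Proof.tensor Γ₂ i₂ A B h₂ π₁' π₂'))
  | tt {Γ : Sequent} (i j i' j' : ℕ) (A B C D : Formula)
      (h1 : Γ[i]? = some (.tensor A B))
      (h2 : (B :: Γ.drop (i+1))[j']? = some (.tensor C D))
      (h3 : Γ[j]? = some (.tensor C D))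
      (h4 : (Γ.take j ++ [C])[i']? = some (.tensor A B))
      (e1 : (Γ.take j ++ [C]).take i' ++ [A] = Γ.take i ++ [A])
      (e2 : B :: (Γ.take j ++ [C]).drop (i'+1) = (B :: Γ.drop (i+1)).take j' ++ [C])
      (e3 : D :: (B :: Γ.drop (i+1)).drop (j'+1) = D :: Γ.drop (j+1))
      (π₁ : Proof (Γ.take i ++ [A])) (π₁' : Proof ((Γ.take j ++ [C]).take i' ++ [A]))
      (hp1 : HEq π₁' π₁)
      (ρ₁ : Proof ((B :: Γ.drop (i+1)).take j' ++ [C]))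
      (ρ₁' : Proof (B :: (Γ.take j ++ [C]).drop (i'+1))) (hp2 : HEq ρ₁' ρ₁)
      (ρ₂ : Proof (D :: (B :: Γ.drop (i+1)).drop (j'+1)))
      (ρ₂' : Proof (D :: Γ.drop (j+1))) (hp3 : HEq ρ₂' ρ₂) :
      Step (Proof.tensor Γ i A B h1 π₁ (Proof.tensor (B :: Γ.drop (i+1)) j' C D h2 ρ₁ ρ₂))
           (Proof.tensor Γ j C D h3 (Proof.tensor (Γ.take j ++ [C]) i' A B h4 π₁' ρ₁') ρ₂')

/-- Commutation equivalence: the reflexive-symmetric-transitive congruence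
closure of one-step rule commutations (applied anywhere in a proof). -/
inductive CommEquiv : {Γ : Sequent} → Proof Γ → Proof Γ → Prop where
  | refl {Γ : Sequent} (π : Proof Γ) : CommEquiv π π
  | symm {Γ : Sequent} {π π' : Proof Γ} : CommEquiv π π' → CommEquiv π' π
  | trans {Γ : Sequent} {π π' π'' : Proof Γ} :
      CommEquiv π π' → CommEquiv π' π'' → CommEquiv π π''
  | step {Γ : Sequent} {π π' : Proof Γ} : Step π π' → CommEquiv π π'
  | congr_unary {Γ Γ' : Sequent} (r : URule) (h : prem r Γ = some Γ') {π π' : Proof Γ'} :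
      CommEquiv π π' → CommEquiv (Proof.unary r Γ Γ' h π) (Proof.unary r Γ Γ' h π')
  | congr_tensor_left {Γ : Sequent} {i : ℕ} {A B : Formula}
      (h : Γ[i]? = some (.tensor A B)) {π₁ π₁' : Proof (Γ.take i ++ [A])}
      {π₂ : Proof (B :: Γ.drop (i+1))} :
      CommEquiv π₁ π₁' → CommEquiv (Proof.tensor Γ i A B h π₁ π₂) (Proof.tensor Γ i A B h π₁' π₂)
  | congr_tensor_right {Γ : Sequent} {i : ℕ} {A B : Formula}
      (h : Γ[i]? = some (.tensor A B)) {π₁ : Proof (Γ.take i ++ [A])}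
      {π₂ π₂' : Proof (B :: Γ.drop (i+1))} :
      CommEquiv π₂ π₂' → CommEquiv (Proof.tensor Γ i A B h π₁ π₂) (Proof.tensor Γ i A B h π₁ π₂')

end UNets
/-! ### Witnesses, skeletons (unification calculus) and re-witnessing -/

namespace UNets

/-- The premise of a unary rule in the unification calculus: as `prem`, except
that the `∀` rule carries no side condition (skeletons of proofs may violate it
locally, just as their axioms may be between non-dual atoms). -/
def premU (r : URule) (Γ : Sequent) : Option Sequent :=
  match r with
  | .uall i x =>
    match Γ[i]? with
    | some (.fall y A) => if y = x then some (Γ.set i A) else none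
    | _ => none
  | _ => prem r Γ

/-- Unification-calculus proofs (skeletons): as cut-free proofs, but axioms may
link non-dual atoms `P ts, P̄ us`, and witnesses are dropped. -/
inductive UProof : Sequent → Type where
  | uax (p : ℕ) (ts us : List Term) : UProof [.atom p ts, .atom (dualP p) us]
  | uunary (r : URule) (Γ Γ' : Sequent) (h : premU r Γ = some Γ') (π : UProof Γ') : UProof Γ
  | utensor (Γ : Sequent) (i : ℕ) (A B : Formula) (h : Γ[i]? = some (.tensor A B))
      (π₁ : UProof (Γ.take i ++ [A])) (π₂ : UProof (B :: Γ.drop (i+1))) : UProof Γ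

/-- Crossing the `∃x`-rule with witness `t` updates the accumulated witness
substitution by `x ↦ t`. -/
def updRho (r : URule) (ρ : ℕ → Term) : ℕ → Term :=
  match r with
  | .uex _ x t => fun z => if z = x then t else ρ z
  | _ => ρ

/-- The rule of the skeleton corresponding to a rule of a proof: the witness of
an `∃` rule is replaced by the bound variable itself. -/
def skelRule (r : URule) : URule :=
  match r with
  | .uex i x _ => .uex i x (.var x)
  | r => r

/-- `Skel π G ρ`: the proof `π` is the instance of the skeleton `G` under the
witness substitution `ρ`; every sequent of `π` is the corresponding sequent of
`G` substituted, and each `∃`-rule of `π` supplies the witness for its variable.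
`Skel π G Term.var` states that `G` is a skeleton of `π`. -/
inductive Skel : {Γ Δ : Sequent} → Proof Γ → UProof Δ → (ℕ → Term) → Prop where
  | ax (p : ℕ) (ts us vs : List Term) (ρ : ℕ → Term)
      (h1 : Term.substList ρ ts = vs) (h2 : Term.substList ρ us = vs) :
      Skel (Proof.ax p vs) (UProof.uax p ts us) ρ
  | unary (r : URule) {Γ Γ' Δ Δ' : Sequent} (ρ : ℕ → Term)
      (h : prem r Γ = some Γ') (hU : premU (skelRule r) Δ = some Δ')
      (hseq : Γ = Δ.map (Formula.subst ρ))
      (π : Proof Γ') (G : UProof Δ') (hrec : Skel π G (updRho r ρ)) :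
      Skel (Proof.unary r Γ Γ' h π) (UProof.uunary (skelRule r) Δ Δ' hU G) ρ
  | tensor {Γ Δ : Sequent} (i : ℕ) (A B A₀ B₀ : Formula) (ρ : ℕ → Term)
      (h : Γ[i]? = some (.tensor A B)) (hU : Δ[i]? = some (.tensor A₀ B₀))
      (hseq : Γ = Δ.map (Formula.subst ρ))
      (π₁ : Proof (Γ.take i ++ [A])) (G₁ : UProof (Δ.take i ++ [A₀]))
      (π₂ : Proof (B :: Γ.drop (i+1))) (G₂ : UProof (B₀ :: Δ.drop (i+1)))
      (h₁ : Skel π₁ G₁ ρ) (h₂ : Skel π₂ G₂ ρ) :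
      Skel (Proof.tensor Γ i A B h π₁ π₂) (UProof.utensor Δ i A₀ B₀ hU G₁ G₂) ρ

/-- Two proofs are related by re-witnessing iff they are instances of a common
skeleton (each is obtained from the other by a sequence of witness replacements). -/
def ReWitnessEquiv {Γ : Sequent} (π π' : Proof Γ) : Prop :=
  ∃ G : UProof Γ, Skel π G Term.var ∧ Skel π' G Term.var

/-- Equivalence of cut-free proofs: generated by rule commutations and
re-witnessings. -/
inductive PrfEquiv : {Γ : Sequent} → Proof Γ → Proof Γ → Prop where
  | comm {Γ : Sequent} {π π' : Proof Γ} : CommEquiv π π' → PrfEquiv π π'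
  | rewit {Γ : Sequent} {π π' : Proof Γ} : ReWitnessEquiv π π' → PrfEquiv π π'
  | trans {Γ : Sequent} {π π' π'' : Proof Γ} :
      PrfEquiv π π' → PrfEquiv π' π'' → PrfEquiv π π''

/-- The witness assignment of a proof: the witness of each non-vacuous
existential variable. -/
def witNV : {Γ : Sequent} → Proof Γ → ℕ → Option Term
  | _, .ax _ _ => fun _ => none
  | _, .unary (.uex i x t) Γ _ _ π => fun y =>
      if y = x ∧ (match Γ[i]? with
                  | some (.fex _ A) => Formula.freeIn x A
                  | _ => false) = true
      then some t else witNV π y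
  | _, .unary _ _ _ _ π => witNV π
  | _, .tensor _ _ _ _ _ π₁ π₂ => fun y => ((witNV π₁ y).orElse (fun _ => witNV π₂ y))

/-- Readiness of a root vertex `v` of `Γ` for a linking `θ`: `⅋` and `∀` roots are
always ready; an `∃` root is ready if it has no outgoing leap; a `⊗` root is ready
if it splits the graph. -/
def Ready (Γ : Sequent) (θ : Linking) (v : ℕ) : Prop :=
  match Γ[v]? with
  | some (.parr _ _) => True
  | some (.fall _ _) => True
  | some (.fex x _) => ¬ ∃ y, Precedes Γ θ x y
  | some (.tensor _ _) => Splits Γ θ (v, [])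
  | _ => False

/-- The final rule of the proof introduces the root vertex `v` of its conclusion. -/
def FinalIntroduces : {Γ : Sequent} → Proof Γ → ℕ → Prop
  | _, .ax _ _, _ => False
  | _, .unary r _ _ _ _, v => r.actIdx = some v
  | _, .tensor _ i _ _ _ _ _, v => v = i

/-- Tracking root (formula) indices from the premise of a unary rule to its
conclusion. -/
def rootMapU (r : URule) (k : ℕ) : ℕ :=
  match r with
  | .uexch i => if k = i then i + 1 else if k = i + 1 then i else k
  | .uparr i => if k ≤ i then k else k - 1
  | _ => k

/-- The penultimate rule of the proof (the last rule of a hypothesis of the final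
rule) is a logical rule introducing the vertex of the conclusion which descends
to root index `v`. -/
def Penult : {Γ : Sequent} → Proof Γ → ℕ → Prop
  | _, .unary r _ _ _ π, v => ∃ w, FinalIntroduces π w ∧ v = rootMapU r w
  | _, .tensor _ i _ _ _ π₁ π₂, v =>
      (∃ w, FinalIntroduces π₁ w ∧ v = w) ∨
      (∃ w, FinalIntroduces π₂ w ∧ v = if w = 0 then i else i + w)
  | _, .ax _ _, _ => False

end UNets
/-! ### The MLL frame of a unification net -/

namespace UNets

/-- A bound on the predicate symbols occurring in `Γ`. -/
def predSup (Γ : Sequent) : ℕ := ((Γ.map Formula.predSyms).flatten).foldr max 0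

/-- The `k`-th fresh predicate symbol for `Γ` (even, so `dualP` is `+1`, and
larger than every predicate symbol of `Γ`). -/
def freshSym (Γ : Sequent) (k : ℕ) : ℕ := 2 * (predSup Γ + k + 1)

/-- Given an enumeration `ps` of the precedences of the net (as pairs of an `∃`
position and a `∀` position), the fresh symbols attached to the `∃` vertex at
path `q` of formula `i`. -/
def exCodes (Γ : Sequent) (ps : List (Pos × Pos)) (i : ℕ) (q : List Bool) : List ℕ :=
  ((ps.zipIdx.map Prod.swap).filter (fun pk => decide (pk.2.1 = ((i, q) : Pos)))).map (fun pk => freshSym Γ pk.1)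

/-- The fresh symbols attached to the `∀` vertex at path `q` of formula `i`. -/
def allCodes (Γ : Sequent) (ps : List (Pos × Pos)) (i : ℕ) (q : List Bool) : List ℕ :=
  ((ps.zipIdx.map Prod.swap).filter (fun pk => decide (pk.2.2 = ((i, q) : Pos)))).map (fun pk => freshSym Γ pk.1)

/-- The frame of a formula: each precedence `x ≺ y` replaces `∃x A` by `Q ⊗ ∃x A`
and `∀y B` by `Q̄ ⅋ ∀y B` for a fresh nullary `Q`; then quantifiers are deleted
and atoms are replaced by nullary atoms. -/
def frameF (exC allC : List Bool → List ℕ) : Formula → List Bool → Formula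
  | .atom p _, _ => .atom p []
  | .tensor A B, q => .tensor (frameF exC allC A (q ++ [false])) (frameF exC allC B (q ++ [true]))
  | .parr A B, q => .parr (frameF exC allC A (q ++ [false])) (frameF exC allC B (q ++ [true]))
  | .fex _ A, q =>
      (exC q).foldr (fun Qk C => .tensor (.atom Qk []) C) (frameF exC allC A (q ++ [false]))
  | .fall _ A, q =>
      (allC q).foldr (fun Qk C => .parr (.atom (dualP Qk) []) C) (frameF exC allC A (q ++ [false]))

/-- The frame `⌊Γ⌋` of the sequent `Γ` (relative to an enumeration `ps` of the
precedences). -/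
def frameSeq (Γ : Sequent) (ps : List (Pos × Pos)) : Sequent :=
  (Γ.zipIdx.map Prod.swap).map (fun p => frameF (exCodes Γ ps p.1) (allCodes Γ ps p.1) p.2 [])

/-- Tags of the leaves of the frame: an old leaf of `Γ`, or a fresh `Q`/`Q̄`. -/
inductive LeafTag : Type where
  | old : LeafTag
  | fq : ℕ → LeafTag
  | fqbar : ℕ → LeafTag
deriving DecidableEq

def frameTagsF (exC allC : List Bool → List ℕ) : Formula → List Bool → List LeafTag
  | .atom _ _, _ => [.old]
  | .tensor A B, q => frameTagsF exC allC A (q ++ [false]) ++ frameTagsF exC allC B (q ++ [true])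
  | .parr A B, q => frameTagsF exC allC A (q ++ [false]) ++ frameTagsF exC allC B (q ++ [true])
  | .fex _ A, q => (exC q).map .fq ++ frameTagsF exC allC A (q ++ [false])
  | .fall _ A, q => (allC q).map .fqbar ++ frameTagsF exC allC A (q ++ [false])

/-- The tags of the leaves of `⌊Γ⌋`, in left-to-right order. -/
def frameTags (Γ : Sequent) (ps : List (Pos × Pos)) : List LeafTag :=
  ((Γ.zipIdx.map Prod.swap).map (fun p => frameTagsF (exCodes Γ ps p.1) (allCodes Γ ps p.1) p.2 [])).flatten

/-- The index among old leaves of the leaf at frame index `i`. -/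
def oldIdx (tags : List LeafTag) (i : ℕ) : ℕ :=
  ((tags.take i).filter (fun t => decide (t = .old))).length

/-- Is `(i,j)` a link of the frame linking? -/
def frameLinkB (θ : Linking) (tags : List LeafTag) (i j : ℕ) : Bool :=
  decide (i < j) &&
    (match tags[i]?, tags[j]? with
     | some .old, some .old =>
         decide ((oldIdx tags i, oldIdx tags j) ∈ θ) ||
         decide ((oldIdx tags j, oldIdx tags i) ∈ θ)
     | some (.fq s), some (.fqbar s') => s == s'
     | some (.fqbar s), some (.fq s') => s == s'
     | _, _ => false)

/-- The frame `⌊θ⌋` of a linking: old links are kept, and each precedence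
contributes a link between its fresh pair `Q`, `Q̄`. -/
def frameLinking (θ : Linking) (tags : List LeafTag) : Linking :=
  (Finset.range tags.length ×ˢ Finset.range tags.length).filter
    (fun e => frameLinkB θ tags e.1 e.2 = true)

/-- An MLL proof net: a linking between strictly dual atoms on a quantifier-free
sequent, all of whose switchings are trees. -/
def IsMLLNet (Γ : Sequent) (θ : Linking) : Prop :=
  (∀ A ∈ Γ, A.qfree = true) ∧
  IsLinking Γ θ ∧
  (∀ e ∈ θ, ∀ a b : ℕ × List Term,
    (Sequent.leaves Γ)[e.1]? = some a → (Sequent.leaves Γ)[e.2]? = some b →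
      a.1 = dualP b.1 ∧ a.2 = b.2) ∧
  AllSwitchingsTrees Γ θ (fun _ _ => False)

/-- `ps` enumerates (without repetition) the precedences of `θ` on `Γ`, as pairs
of the corresponding `∃` and `∀` positions. -/
def EnumPrec (Γ : Sequent) (θ : Linking) (ps : List (Pos × Pos)) : Prop :=
  ps.Nodup ∧
  ∀ e : Pos × Pos, e ∈ ps ↔
    ∃ x y A B, Sequent.pos? Γ e.1 = some (.fex x A) ∧ Sequent.pos? Γ e.2 = some (.fall y B) ∧
      Precedes Γ θ x y

/-- The (new) positions of the `⊗` vertices added in step (1) of the frame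
construction, inside one formula: recursion tracks the old path `q` (for looking
up precedences) and the new path `q'`. -/
def addedTensorPosF (exC allC : List Bool → List ℕ) :
    Formula → List Bool → List Bool → List (List Bool)
  | .atom _ _, _, _ => []
  | .tensor A B, q, q' =>
      addedTensorPosF exC allC A (q ++ [false]) (q' ++ [false]) ++
      addedTensorPosF exC allC B (q ++ [true]) (q' ++ [true])
  | .parr A B, q, q' =>
      addedTensorPosF exC allC A (q ++ [false]) (q' ++ [false]) ++
      addedTensorPosF exC allC B (q ++ [true]) (q' ++ [true])
  | .fex _ A, q, q' =>
      (List.range (exC q).length).map (fun m => q' ++ List.replicate m true) ++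
      addedTensorPosF exC allC A (q ++ [false]) (q' ++ List.replicate (exC q).length true)
  | .fall _ A, q, q' =>
      addedTensorPosF exC allC A (q ++ [false]) (q' ++ List.replicate (allC q).length true)

/-- The positions in `⌊Γ⌋` of all the tensors added during the frame construction. -/
def addedTensors (Γ : Sequent) (ps : List (Pos × Pos)) : List Pos :=
  ((Γ.zipIdx.map Prod.swap).map (fun p =>
    (addedTensorPosF (exCodes Γ ps p.1) (allCodes Γ ps p.1) p.2 [] []).map
      (fun q => ((p.1, q) : Pos)))).flatten

end UNets
/-! ### Cut sequents, unification nets with cuts, cut reduction -/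

namespace UNets

/-- A cut sequent: a sequent together with a list of cuts; the cut `A ∗ Ā` is
recorded by the formula `A`. -/
structure CutSeq : Type where
  main : Sequent
  cuts : List Formula

/-- The encoding of the cut `A ∗ Ā` as the existential closure
`∃x₁…∃xₙ (A ⊗ Ā)` over the free variables of `A` (the cut variables). -/
def encodeCut (A : Formula) : Formula :=
  (A.freeList.dedup).foldr (fun x C => .fex x C) (.tensor A A.dual)

/-- The encoding of a cut sequent: replace every cut by its encoding
(the leaves are kept, in the same order). -/
def CutSeq.encode (Δ : CutSeq) : Sequent := Δ.main ++ Δ.cuts.map encodeCut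

/-- A unification net on a cut sequent: a cut-free unification net on its encoding. -/
def IsCutUNet (Δ : CutSeq) (θ : Linking) : Prop := IsUNet (CutSeq.encode Δ) θ

/-- The leaf index of the first leaf of cut number `k`. -/
def cutBase (Δ : CutSeq) (k : ℕ) : ℕ :=
  leafCountS Δ.main + 2 * ((Δ.cuts.take k).map leafCountF).sum

/-- Leaf re-indexing for the atomic cut reduction (the two cut leaves at `m`,
`m+1` disappear). -/
def shrink2 (m a : ℕ) : ℕ := if a > m + 1 then a - 2 else a

/-- Leaf re-indexing for the multiplicative cut reduction: the blocks `B` and `Ā`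
of the cut `(A ⊗ B) ∗ (Ā ⅋ B̄)` (of widths `b`, `a`, at base `n0`) are swapped. -/
def midswap (n0 a b : ℕ) (k : ℕ) : ℕ :=
  if k < n0 + a then k
  else if k < n0 + a + b then k + a
  else if k < n0 + a + b + a then k - b
  else k

/-- One-step cut reduction on linkings on cut sequents. -/
inductive Reduce : CutSeq × Linking → CutSeq × Linking → Prop where
  /-- A quantifier cut `(∃x Ā) ∗ (∀x A)` reduces to the cut `Ā ∗ A`. -/
  | quantEx (Δ : CutSeq) (θ : Linking) (k x : ℕ) (B : Formula)
      (h : Δ.cuts[k]? = some (.fex x B)) :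
      Reduce (Δ, θ) (⟨Δ.main, Δ.cuts.set k B⟩, θ)
  /-- The same reduction, with the cut recorded from its `∀` side. -/
  | quantAll (Δ : CutSeq) (θ : Linking) (k x : ℕ) (B : Formula)
      (h : Δ.cuts[k]? = some (.fall x B)) :
      Reduce (Δ, θ) (⟨Δ.main, Δ.cuts.set k B⟩, θ)
  /-- A multiplicative cut `(A ⊗ B) ∗ (Ā ⅋ B̄)` reduces to the cuts `A ∗ Ā`, `B ∗ B̄`. -/
  | mult (Δ : CutSeq) (θ : Linking) (k : ℕ) (A B C : Formula)
      (h : Δ.cuts[k]? = some C) (hC : C = .tensor A B ∨ C = .parr A B) :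
      Reduce (Δ, θ)
        (⟨Δ.main, Δ.cuts.take k ++ A :: B :: Δ.cuts.drop (k+1)⟩,
         θ.image (fun e =>
           mkpair (midswap (cutBase Δ k) (leafCountF A) (leafCountF B) e.1)
                  (midswap (cutBase Δ k) (leafCountF A) (leafCountF B) e.2)))
  /-- An atomic cut `P ts ∗ P̄ ts`, whose leaves are linked to leaves `i` and `j`,
  is deleted, and `i` is linked directly to `j`. -/
  | atomic (Δ : CutSeq) (θ : Linking) (k p : ℕ) (ts : List Term) (i j : ℕ)
      (h : Δ.cuts[k]? = some (.atom p ts))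
      (hi : InLink θ i (cutBase Δ k)) (hj : InLink θ (cutBase Δ k + 1) j)
      (hine : i ≠ cutBase Δ k ∧ i ≠ cutBase Δ k + 1)
      (hjne : j ≠ cutBase Δ k ∧ j ≠ cutBase Δ k + 1) :
      Reduce (Δ, θ)
        (⟨Δ.main, Δ.cuts.eraseIdx k⟩,
         insert (mkpair (shrink2 (cutBase Δ k) i) (shrink2 (cutBase Δ k) j))
           ((θ.filter (fun e => ¬ (e.1 = cutBase Δ k ∨ e.2 = cutBase Δ k ∨
               e.1 = cutBase Δ k + 1 ∨ e.2 = cutBase Δ k + 1))).image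
             (fun e => mkpair (shrink2 (cutBase Δ k) e.1) (shrink2 (cutBase Δ k) e.2))))

/-- The size of a cut sequent. -/
def csize (Δ : CutSeq) : ℕ := ((Δ.main ++ Δ.cuts).map Formula.size).sum

/-- Iterated cut reduction. -/
abbrev ReduceStar : CutSeq × Linking → CutSeq × Linking → Prop :=
  Relation.ReflTransGen Reduce

end UNets
/-! ### FOMLL⁺: the sequent calculus with the extended cut rule -/

namespace UNets

/-- Proofs of cut sequents in FOMLL⁺: the cut-free rules act on the main part of
the sequent; the extended cut rule infers `Γ, A ∗ Ā, Δ` from `Γ, Aσ` and `Āσ, Δ`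
for any substitution `σ` of terms for the free variables of `A`, retaining the
cut formulas in the conclusion. -/
inductive ProofP : CutSeq → Type where
  | ax (p : ℕ) (ts : List Term) : ProofP ⟨[.atom p ts, .atom (dualP p) ts], []⟩
  | unary (r : URule) (Δ : CutSeq) (Γ' : Sequent) (h : prem r Δ.main = some Γ')
      (π : ProofP ⟨Γ', Δ.cuts⟩) : ProofP Δ
  | tensor (Γm : Sequent) (i : ℕ) (A B : Formula) (h : Γm[i]? = some (.tensor A B))
      (c₁ c₂ : List Formula)
      (π₁ : ProofP ⟨Γm.take i ++ [A], c₁⟩) (π₂ : ProofP ⟨B :: Γm.drop (i+1), c₂⟩) :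
      ProofP ⟨Γm, c₁ ++ c₂⟩
  | cut (Γm Δm : Sequent) (c₁ c₂ : List Formula) (A : Formula) (σ : ℕ → Term)
      (hσ : ∀ z, z ∉ Formula.freeList A → σ z = .var z)
      (π₁ : ProofP ⟨Γm ++ [A.subst σ], c₁⟩) (π₂ : ProofP ⟨A.dual.subst σ :: Δm, c₂⟩) :
      ProofP ⟨Γm ++ Δm, c₁ ++ A :: c₂⟩

/-- Leaf count contributed by a list of cuts. -/
def lcC (c : List Formula) : ℕ := 2 * (c.map leafCountF).sum

/-- Leaf re-indexing from the left premise of a `⊗` rule to its conclusion. -/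
def tenRemap1 (g a rest : ℕ) (k : ℕ) : ℕ := if k < g + a then k else k + rest

/-- Leaf re-indexing from the right premise of a `⊗` rule to its conclusion. -/
def tenRemap2 (g a b d C1 : ℕ) (k : ℕ) : ℕ :=
  if k < b + d then k + g + a else k + g + a + C1

/-- Leaf re-indexing from the left premise of a cut rule to its conclusion. -/
def cutRemap1 (g a d C1 : ℕ) (k : ℕ) : ℕ :=
  if k < g then k else if k < g + a then k + d + C1 else k + d - a

/-- Leaf re-indexing from the right premise of a cut rule to its conclusion. -/
def cutRemap2 (g a d C1 : ℕ) (k : ℕ) : ℕ :=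
  if k < a then g + d + C1 + a + k else if k < a + d then k - a + g else k + g + C1 + a

/-- The translation of an FOMLL⁺ proof to a linking on its concluding cut
sequent, tracking the dual predicate-symbol pairs of axioms down to leaves. -/
def translateP : {Δ : CutSeq} → ProofP Δ → Linking
  | _, .ax _ _ => {(0, 1)}
  | _, .unary r Δ _ _ π =>
      (translateP π).image (fun e => mkpair (remap r Δ.main e.1) (remap r Δ.main e.2))
  | _, .tensor Γm i A B _ c₁ _ π₁ π₂ =>
      let g := leafCountS (Γm.take i); let a := leafCountF A; let b := leafCountF B
      let d := leafCountS (Γm.drop (i+1)); let C1 := lcC c₁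
      (translateP π₁).image (fun e => mkpair (tenRemap1 g a (b + d) e.1) (tenRemap1 g a (b + d) e.2)) ∪
      (translateP π₂).image (fun e => mkpair (tenRemap2 g a b d C1 e.1) (tenRemap2 g a b d C1 e.2))
  | _, .cut Γm Δm c₁ _ A _ _ π₁ π₂ =>
      let g := leafCountS Γm; let a := leafCountF A
      let d := leafCountS Δm; let C1 := lcC c₁
      (translateP π₁).image (fun e => mkpair (cutRemap1 g a d C1 e.1) (cutRemap1 g a d C1 e.2)) ∪
      (translateP π₂).image (fun e => mkpair (cutRemap2 g a d C1 e.1) (cutRemap2 g a d C1 e.2))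

end UNets
/-! ### Girard nets (first-order proof nets with explicit witnesses) -/

namespace UNets

/-- The unfolded subformula at a path: the subformula with the explicit witness
`w x` of every `∃x` above it substituted (outermost witnesses substituted last,
as in Girard's unfolding of `∃x A` to `A[t/x]`). -/
def unfSub (w : ℕ → Term) : Formula → List Bool → Option Formula
  | A, [] => some A
  | .tensor A B, b :: q => unfSub w (if b then B else A) q
  | .parr A B, b :: q => unfSub w (if b then B else A) q
  | .fall _ A, false :: q => unfSub w A q
  | .fex x A, false :: q => (unfSub w A q).map (fun F => F.subst1 x (w x))
  | _, _ => none

/-- The unfolded subformula of a sequent at a position. -/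
def Sequent.unfPos? (Γ : Sequent) (w : ℕ → Term) (v : Pos) : Option Formula :=
  match Γ[v.1]? with
  | some A => unfSub w A v.2
  | none => none

/-- A jump: a directed edge from a vertex whose unfolded formula contains the
eigenvariable `y` free, into the `∀y` vertex. -/
def Jump (Γ : Sequent) (w : ℕ → Term) (a b : Pos) : Prop :=
  ∃ y B F, Sequent.pos? Γ b = some (.fall y B) ∧
    Sequent.unfPos? Γ w a = some F ∧ F.freeIn y = true

/-- A cut-free Girard net on `Γ`: an explicit witness `w x` for each existential
variable `x` (the `∃`-links of the unfolding of `Γ`), together with an axiom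
linking whose links join strictly dual unfolded atoms (identical term
sequences), such that every switching (with jumps) is a tree. -/
def IsGirardNet (Γ : Sequent) (w : ℕ → Term) (θ : Linking) : Prop :=
  IsLinking Γ θ ∧
  (∀ e ∈ θ, ∀ a b : Pos,
    (Sequent.leafPos Γ)[e.1]? = some a → (Sequent.leafPos Γ)[e.2]? = some b →
      ∃ p ts, Sequent.unfPos? Γ w a = some (.atom p ts) ∧
              Sequent.unfPos? Γ w b = some (.atom (dualP p) ts)) ∧
  AllSwitchingsTrees Γ θ (Jump Γ w)

end UNets
/-! ### Triangular substitution sequences and a worked unification example -/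

namespace UNets

/-- Sequential composition of single-variable substitutions, applied to a term:
`compApply [(x₁,t₁),…,(xₙ,tₙ)] s = s [xₙ↦tₙ] ⋯ [x₁↦t₁]` (the first substitution
of the list is applied last). -/
def compApply : List (ℕ × Term) → Term → Term
  | [], s => s
  | p :: rest, s => Term.subst (varSubst p.1 p.2) (compApply rest s)

/-- `σ` solves the unification problem `E` (a list of equations between terms). -/
def SolvesProb (σ : ℕ → Term) (E : List (Term × Term)) : Prop :=
  ∀ e ∈ E, Term.subst σ e.1 = Term.subst σ e.2

/-- The list of single-variable substitutions `[x₁ ↦ t₁], …, [xₙ ↦ tₙ]`. -/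
def subsOf (n : ℕ) (xs : Fin n → ℕ) (ts : Fin n → Term) : List (ℕ × Term) :=
  (List.finRange n).map (fun i => (xs i, ts i))

/-- The constant `c` (for the size blow-up example). -/
def cTerm : Term := .app 1 []

/-- The infix binary function symbol `·` (for the size blow-up example). -/
def dotT (s t : Term) : Term := .app 0 [s, t]

/-- The argument list `x₁, x₁·x₁, x₃, x₃·x₃, …` (up to the `n`-th argument). -/
def argsA (n : ℕ) : List Term :=
  (List.range n).map (fun k => if (k+1) % 2 = 1 then .var (k+1) else dotT (.var k) (.var k))

/-- The argument list `c, x₂, x₂·x₂, x₄, …` (up to the `n`-th argument). -/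
def argsB (n : ℕ) : List Term :=
  (List.range n).map (fun k =>
    if k = 0 then cTerm else if (k+1) % 2 = 1 then dotT (.var k) (.var k) else .var (k+1))

def oddVars (n : ℕ) : List ℕ := ((List.range n).map (· + 1)).filter (fun i => i % 2 = 1)
def evenVars (n : ℕ) : List ℕ := ((List.range n).map (· + 1)).filter (fun i => i % 2 = 0)

/-- The two-formula sequent
`∃x₁∃x₃… P̄(x₁, x₁·x₁, x₃, …), ∃x₂∃x₄… P(c, x₂, x₂·x₂, …)`
(predicate symbols `3 = dualP 2` and `2`). -/
def GammaN (n : ℕ) : Sequent :=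
  [ (oddVars n).foldr (fun x C => .fex x C) (.atom 3 (argsA n)),
    (evenVars n).foldr (fun x C => .fex x C) (.atom 2 (argsB n)) ]

end UNets

namespace UNets

theorem _root_.List.sum_map_splice {α M : Type*} [AddCommMonoid M] (f : α → M) {l : List α} {k : ℕ} {a : α}
    (h : l[k]? = some a) (m : List α) :
    ((l.take k ++ (m ++ l.drop (k + 1))).map f).sum + f a = (l.map f).sum + (m.map f).sum := by
  obtain ⟨hk, rfl⟩ := List.getElem?_eq_some_iff.mp h
  conv_rhs => rw [← List.take_append_drop k l, List.drop_eq_getElem_cons hk]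
  simp only [List.map_append, List.map_cons, List.sum_append, List.sum_cons]
  abel

theorem csize_splice {Δ : CutSeq} {k : ℕ} {C : Formula} (h : Δ.cuts[k]? = some C)
    (m : List Formula) :
    csize ⟨Δ.main, Δ.cuts.take k ++ (m ++ Δ.cuts.drop (k + 1))⟩ + C.size
      = csize Δ + (m.map Formula.size).sum := by
  have := List.sum_map_splice Formula.size h m
  simp only [csize, List.map_append, List.sum_append] at this ⊢
  omega

theorem Reduce.csize_lt {s t : CutSeq × Linking} (h : Reduce s t) : csize t.1 < csize s.1 := by
  cases h with
  | quantEx Δ θ k x B h | quantAll Δ θ k x B h =>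
    have := csize_splice h [B]
    rw [List.set_eq_take_cons_drop _ (List.getElem?_eq_some_iff.mp h).1]
    simp only [Formula.size, List.map_cons, List.map_nil, List.sum_cons, List.sum_nil,
      List.cons_append, List.nil_append] at this ⊢
    omega
  | mult Δ θ k A B C h hC =>
    have := csize_splice h [A, B]
    have hC : C.size = A.size + B.size + 1 := by rcases hC with rfl | rfl <;> rfl
    simp only [List.map_cons, List.map_nil, List.sum_cons, List.sum_nil,
      List.cons_append, List.nil_append] at this ⊢
    omega
  | atomic Δ θ k p ts i j h =>
    have := csize_splice h []
    rw [List.eraseIdx_eq_take_drop_succ]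
    simp only [Formula.size, List.map_nil, List.sum_nil, List.nil_append] at this ⊢
    omega

theorem add_le_of_forall_lt_succ_lt {g : ℕ → ℕ} {L : ℕ} (h : ∀ n < L, g (n + 1) < g n) :
    g L + L ≤ g 0 := by
  induction L with
  | zero => simp
  | succ L ih =>
    have := h L L.lt_succ_self
    have := ih fun n hn => h n (hn.trans L.lt_succ_self)
    omega

/-- Cut reduction on unification nets is strongly normalizing:
each cut reduction strictly decreases the size of the underlying cut sequent;
hence every sequence of cut reductions from a unification net terminates, and
the length of any reduction sequence is bounded by the size of the cut sequent. -/
theorem strong_normalization :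
    (∀ s t : CutSeq × Linking, Reduce s t → csize t.1 < csize s.1) ∧
    (∀ f : ℕ → CutSeq × Linking, IsCutUNet (f 0).1 (f 0).2 →
      ¬ (∀ n, Reduce (f n) (f (n+1)))) ∧
    (∀ (f : ℕ → CutSeq × Linking) (L : ℕ), IsCutUNet (f 0).1 (f 0).2 →
      (∀ n < L, Reduce (f n) (f (n+1))) → L ≤ csize (f 0).1) := by
  have chain_bound : ∀ (f : ℕ → CutSeq × Linking) (L : ℕ),
      (∀ n < L, Reduce (f n) (f (n + 1))) → L ≤ csize (f 0).1 := fun f L hf =>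
    (Nat.le_add_left _ _).trans
      (add_le_of_forall_lt_succ_lt (g := fun n => csize (f n).1) fun n hn => (hf n hn).csize_lt)
  refine ⟨fun _ _ h => h.csize_lt, fun f _ hf => ?_, fun f L _ => chain_bound f L⟩
  have := chain_bound f (csize (f 0).1 + 1) fun n _ => hf n
  omega

end UNets
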